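/- L^∘ is a conservative extension of L: a sequent A1,…,An → B in which no type contains the connective ^∘ is derivable in L^∘ if and only if it is derivable in L. -/

import Mathlib

/-- Types of the Lambek calculus with the cyclic shift `L^∘`, built from
primitive types `P` by `\` (`ldiv A B = A \ B`), `/` (`rdiv B A = B / A`),
`·` (`mul`) and the cyclic shift `^∘` (`circ`). -/
inductive Fm (P : Type) : Type
  | prim : P → Fm P
  | ldiv : Fm P → Fm P → Fm P
  | rdiv : Fm P → Fm P → Fm P
  | mul  : Fm P → Fm P → Fm P
  | circ : Fm P → Fm P
deriving DecidableEq

open Fm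

/-- Derivability of sequents in the Lambek calculus with the cyclic shift `L^∘`.
The Boolean flag indicates whether the rule (cut) may be used:
`Dv P true` is `L^∘` (with cut), `Dv P false` is its cut-free part. -/
inductive Dv (P : Type) : Bool → List (Fm P) → Fm P → Prop
  | ax (c : Bool) (A : Fm P) :
      Dv P c [A] A
  | ldivL (c : Bool) (Γ Δ Pi : List (Fm P)) (A B C : Fm P) :
      Dv P c (Γ ++ B :: Δ) C → Dv P c Pi A → Pi ≠ [] →
      Dv P c (Γ ++ Pi ++ ldiv A B :: Δ) C
  | ldivR (c : Bool) (Pi : List (Fm P)) (A B : Fm P) :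
      Dv P c (A :: Pi) B → Pi ≠ [] →
      Dv P c Pi (ldiv A B)
  | rdivL (c : Bool) (Γ Δ Pi : List (Fm P)) (A B C : Fm P) :
      Dv P c (Γ ++ B :: Δ) C → Dv P c Pi A → Pi ≠ [] →
      Dv P c (Γ ++ rdiv B A :: (Pi ++ Δ)) C
  | rdivR (c : Bool) (Pi : List (Fm P)) (A B : Fm P) :
      Dv P c (Pi ++ [A]) B → Pi ≠ [] →
      Dv P c Pi (rdiv B A)
  | mulL (c : Bool) (Γ Δ : List (Fm P)) (A B C : Fm P) :
      Dv P c (Γ ++ A :: B :: Δ) C →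
      Dv P c (Γ ++ mul A B :: Δ) C
  | mulR (c : Bool) (Pi Psi : List (Fm P)) (A B : Fm P) :
      Dv P c Pi A → Dv P c Psi B → Pi ≠ [] → Psi ≠ [] →
      Dv P c (Pi ++ Psi) (mul A B)
  | circR (c : Bool) (Pi : List (Fm P)) (A : Fm P) :
      Dv P c Pi A →
      Dv P c Pi (circ A)
  | circL (c : Bool) (A B : Fm P) :
      Dv P c [B] (circ A) →
      Dv P c [circ B] (circ A)
  | circC (c : Bool) (Pi Psi : List (Fm P)) (A : Fm P) :
      Dv P c (Pi ++ Psi) (circ A) → Pi ≠ [] → Psi ≠ [] →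
      Dv P c (Psi ++ Pi) (circ A)
  | cut (Γ Δ Pi : List (Fm P)) (A B : Fm P) :
      Dv P true Pi A → Dv P true (Γ ++ A :: Δ) B → Pi ≠ [] →
      Dv P true (Γ ++ Pi ++ Δ) B

/-- Derivability in the pure Lambek calculus `L` (with cut): the same rules as
`L^∘` but without the rules for the cyclic shift `^∘`. -/
inductive DvL (P : Type) : List (Fm P) → Fm P → Prop
  | ax (A : Fm P) :
      DvL P [A] A
  | ldivL (Γ Δ Pi : List (Fm P)) (A B C : Fm P) :
      DvL P (Γ ++ B :: Δ) C → DvL P Pi A → Pi ≠ [] →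
      DvL P (Γ ++ Pi ++ Fm.ldiv A B :: Δ) C
  | ldivR (Pi : List (Fm P)) (A B : Fm P) :
      DvL P (A :: Pi) B → Pi ≠ [] →
      DvL P Pi (Fm.ldiv A B)
  | rdivL (Γ Δ Pi : List (Fm P)) (A B C : Fm P) :
      DvL P (Γ ++ B :: Δ) C → DvL P Pi A → Pi ≠ [] →
      DvL P (Γ ++ Fm.rdiv B A :: (Pi ++ Δ)) C
  | rdivR (Pi : List (Fm P)) (A B : Fm P) :
      DvL P (Pi ++ [A]) B → Pi ≠ [] →
      DvL P Pi (Fm.rdiv B A)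
  | mulL (Γ Δ : List (Fm P)) (A B C : Fm P) :
      DvL P (Γ ++ A :: B :: Δ) C →
      DvL P (Γ ++ Fm.mul A B :: Δ) C
  | mulR (Pi Psi : List (Fm P)) (A B : Fm P) :
      DvL P Pi A → DvL P Psi B → Pi ≠ [] → Psi ≠ [] →
      DvL P (Pi ++ Psi) (Fm.mul A B)
  | cut (Γ Δ Pi : List (Fm P)) (A B : Fm P) :
      DvL P Pi A → DvL P (Γ ++ A :: Δ) B → Pi ≠ [] →
      DvL P (Γ ++ Pi ++ Δ) B

/-- A type contains no occurrence of the cyclic shift connective `^∘`. -/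
def circFree {P : Type} : Fm P → Prop
  | Fm.prim _ => True
  | Fm.ldiv A B => circFree A ∧ circFree B
  | Fm.rdiv A B => circFree A ∧ circFree B
  | Fm.mul A B => circFree A ∧ circFree B
  | Fm.circ _ => False

/-!
The proof is semantic, through a canonical model built from `L` itself. A type is
interpreted as a set of nonempty sequences of types: a primitive `p` by the sequences
`Φ` with `Φ → p` derivable in `L`, the divisions as residuals of concatenation, `A · B`
as the closure of the concatenations `⟦A⟧⟦B⟧` under all contexts of `L`, and `A^∘` as
the least superset of `⟦A⟧` closed under cyclic shifts and under that closure. Every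
rule of `L^∘`, cut included, is sound in this model. For a `^∘`-free type `A`, on the
other hand, `[A] ∈ ⟦A⟧` and every member `Φ` of `⟦A⟧` derives `A` in `L`. So if
`Γ → B` is derivable in `L^∘`, then `Γ ∈ ⟦B⟧`, and hence `Γ → B` is derivable in `L`.
-/

open Fm

section CanonicalModel

variable {P : Type}

theorem DvL.ne_nil {Γ : List (Fm P)} {A : Fm P} (h : DvL P Γ A) : Γ ≠ [] := by
  induction h <;> simp_all

theorem DvL.toDv {Γ : List (Fm P)} {B : Fm P} (h : DvL P Γ B) : Dv P true Γ B := by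
  induction h with
  | ax A => exact Dv.ax _ A
  | ldivL Γ Δ Pi A B C _ _ hne ih₁ ih₂ =>
    exact Dv.ldivL _ Γ Δ Pi A B C ih₁ ih₂ hne
  | ldivR Pi A B _ hne ih => exact Dv.ldivR _ Pi A B ih hne
  | rdivL Γ Δ Pi A B C _ _ hne ih₁ ih₂ =>
    exact Dv.rdivL _ Γ Δ Pi A B C ih₁ ih₂ hne
  | rdivR Pi A B _ hne ih => exact Dv.rdivR _ Pi A B ih hne
  | mulL Γ Δ A B C _ ih => exact Dv.mulL _ Γ Δ A B C ih
  | mulR Pi Psi A B _ _ hne₁ hne₂ ih₁ ih₂ =>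
    exact Dv.mulR _ Pi Psi A B ih₁ ih₂ hne₁ hne₂
  | cut Γ Δ Pi A B _ _ hne ih₁ ih₂ => exact Dv.cut Γ Δ Pi A B ih₁ ih₂ hne

variable (P) in
def ctxClosure (X : Set (List (Fm P))) : Set (List (Fm P)) :=
  {Φ | Φ ≠ [] ∧ ∀ Γ Δ C, (∀ Ψ ∈ X, DvL P (Γ ++ Ψ ++ Δ) C) → DvL P (Γ ++ Φ ++ Δ) C}

theorem ctxClosure_mono {X Y : Set (List (Fm P))} (h : X ⊆ Y) :
    ctxClosure P X ⊆ ctxClosure P Y :=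
  fun _ ⟨hne, hΦ⟩ => ⟨hne, fun Γ Δ C hY => hΦ Γ Δ C fun Ψ hΨ => hY Ψ (h hΨ)⟩

theorem ctxClosure_ctxClosure_subset {X : Set (List (Fm P))} :
    ctxClosure P (ctxClosure P X) ⊆ ctxClosure P X :=
  fun _ ⟨hne, hΦ⟩ => ⟨hne, fun Γ Δ C hX => hΦ Γ Δ C fun _ hΨ => hΨ.2 Γ Δ C hX⟩

def CyclicClosed (X : Set (List (Fm P))) : Prop :=
  ∀ x y : List (Fm P), x ++ y ∈ X → x ≠ [] → y ≠ [] → y ++ x ∈ X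

variable (P) in
def cycClosure (X : Set (List (Fm P))) : Set (List (Fm P)) :=
  ⋂₀ {Y | X ⊆ Y ∧ CyclicClosed Y ∧ ctxClosure P Y ⊆ Y}

theorem cycClosure_subset {X Y : Set (List (Fm P))} (hXY : X ⊆ Y) (hY : CyclicClosed Y)
    (hY' : ctxClosure P Y ⊆ Y) : cycClosure P X ⊆ Y :=
  fun _ hΦ => hΦ Y ⟨hXY, hY, hY'⟩

theorem subset_cycClosure {X : Set (List (Fm P))} : X ⊆ cycClosure P X :=
  fun _ hΦ _ hY => hY.1 hΦ

theorem cyclicClosed_cycClosure {X : Set (List (Fm P))} : CyclicClosed (cycClosure P X) :=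
  fun x y hxy hx hy Y hY => hY.2.1 x y (hxy Y hY) hx hy

theorem ctxClosure_cycClosure_subset {X : Set (List (Fm P))} :
    ctxClosure P (cycClosure P X) ⊆ cycClosure P X :=
  fun _ hΦ _ hY => hY.2.2 (ctxClosure_mono (cycClosure_subset hY.1 hY.2.1 hY.2.2) hΦ)

def Fm.sem : Fm P → Set (List (Fm P))
  | prim p => {Φ | DvL P Φ (prim p)}
  | ldiv A B => {w | w ≠ [] ∧ ∀ u ∈ A.sem, u ++ w ∈ B.sem}
  | rdiv B A => {w | w ≠ [] ∧ ∀ u ∈ A.sem, w ++ u ∈ B.sem}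
  | mul A B => ctxClosure P (Set.image2 (· ++ ·) A.sem B.sem)
  | circ A => cycClosure P A.sem

theorem Fm.ne_nil_of_mem_sem {A : Fm P} {Φ : List (Fm P)} (h : Φ ∈ A.sem) : Φ ≠ [] := by
  induction A generalizing Φ with
  | prim p => exact DvL.ne_nil h
  | ldiv | rdiv | mul => exact h.1
  | circ A ih =>
    have hY : CyclicClosed {Φ : List (Fm P) | Φ ≠ []} := by
      intro x y _ _ hy
      simp [hy]
    exact cycClosure_subset (fun _ => ih) hY (fun _ hΦ => hΦ.1) h

theorem Fm.ctxClosure_sem_subset (A : Fm P) : ctxClosure P A.sem ⊆ A.sem := by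
  induction A with
  | prim p =>
    rintro Φ ⟨-, hΦ⟩
    show DvL P Φ (prim p)
    simpa using hΦ [] [] (prim p) fun Ψ (hΨ : DvL P Ψ (prim p)) => by simpa using hΨ
  | ldiv A B _ ihB =>
    rintro w ⟨hne, hw⟩
    refine ⟨hne, fun u hu => ihB ⟨by simp [hne], fun Γ Δ C hB => ?_⟩⟩
    simpa using hw (Γ ++ u) Δ C fun Ψ hΨ => by simpa using hB _ (hΨ.2 u hu)
  | rdiv B A ihB _ =>
    rintro w ⟨hne, hw⟩
    refine ⟨hne, fun u hu => ihB ⟨by simp [hne], fun Γ Δ C hB => ?_⟩⟩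
    simpa using hw Γ (u ++ Δ) C fun Ψ hΨ => by simpa using hB _ (hΨ.2 u hu)
  | mul => exact ctxClosure_ctxClosure_subset
  | circ => exact ctxClosure_cycClosure_subset

theorem Fm.sem_subset_and_singleton_mem_sem {A : Fm P} (hA : circFree A) :
    A.sem ⊆ {Φ | DvL P Φ A} ∧ [A] ∈ A.sem := by
  induction A with
  | prim p => exact ⟨fun _ hΦ => hΦ, DvL.ax _⟩
  | ldiv A B ihA ihB =>
    obtain ⟨hAD, hAmem⟩ := ihA hA.1
    obtain ⟨hBD, hBmem⟩ := ihB hA.2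
    refine ⟨fun w ⟨hne, hw⟩ => DvL.ldivR w A B (hBD (hw [A] hAmem)) hne,
      by simp, fun u hu => ctxClosure_sem_subset B ⟨by simp, fun Γ Δ C hB => ?_⟩⟩
    simpa using DvL.ldivL Γ Δ u A B C (by simpa using hB [B] hBmem) (hAD hu)
      (ne_nil_of_mem_sem hu)
  | rdiv B A ihB ihA =>
    obtain ⟨hBD, hBmem⟩ := ihB hA.1
    obtain ⟨hAD, hAmem⟩ := ihA hA.2
    refine ⟨fun w ⟨hne, hw⟩ => DvL.rdivR w A B (hBD (hw [A] hAmem)) hne,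
      by simp, fun u hu => ctxClosure_sem_subset B ⟨by simp, fun Γ Δ C hB => ?_⟩⟩
    simpa using DvL.rdivL Γ Δ u A B C (by simpa using hB [B] hBmem) (hAD hu)
      (ne_nil_of_mem_sem hu)
  | mul A B ihA ihB =>
    obtain ⟨hAD, hAmem⟩ := ihA hA.1
    obtain ⟨hBD, hBmem⟩ := ihB hA.2
    constructor
    · rintro Φ ⟨-, hΦ⟩
      simpa using hΦ [] [] (mul A B) fun Ψ hΨ => by
        obtain ⟨u, hu, v, hv, rfl⟩ := hΨ
        simpa using DvL.mulR u v A B (hAD hu) (hBD hv) (ne_nil_of_mem_sem hu)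
          (ne_nil_of_mem_sem hv)
    · refine ⟨by simp, fun Γ Δ C hAB => ?_⟩
      have hABΔ := hAB _ (Set.mem_image2_of_mem hAmem hBmem)
      simpa using DvL.mulL Γ Δ A B C (by simpa using hABΔ)
  | circ => exact hA.elim

inductive SemCtx : List (Fm P) → List (Fm P) → Prop
  | nil : SemCtx [] []
  | cons {A : Fm P} {Γ u Φ : List (Fm P)} : u ∈ A.sem → SemCtx Γ Φ → SemCtx (A :: Γ) (u ++ Φ)

theorem semCtx_cons_iff {A : Fm P} {Γ Φ : List (Fm P)} :
    SemCtx (A :: Γ) Φ ↔ ∃ u v, u ∈ A.sem ∧ SemCtx Γ v ∧ Φ = u ++ v := by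
  constructor
  · intro h
    cases h with
    | cons hu hv => exact ⟨_, _, hu, hv, rfl⟩
  · rintro ⟨u, v, hu, hv, rfl⟩
    exact .cons hu hv

theorem semCtx_singleton_iff {A : Fm P} {Φ : List (Fm P)} : SemCtx [A] Φ ↔ Φ ∈ A.sem := by
  rw [semCtx_cons_iff]
  constructor
  · rintro ⟨u, v, hu, ⟨⟩, rfl⟩
    simpa using hu
  · exact fun h => ⟨Φ, [], h, .nil, by simp⟩

theorem semCtx_append_iff {Γ Δ Φ : List (Fm P)} :
    SemCtx (Γ ++ Δ) Φ ↔ ∃ a b, SemCtx Γ a ∧ SemCtx Δ b ∧ Φ = a ++ b := by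
  induction Γ generalizing Φ with
  | nil =>
    exact ⟨fun h => ⟨[], Φ, .nil, h, rfl⟩, by rintro ⟨_, b, ⟨⟩, hb, rfl⟩; exact hb⟩
  | cons A Γ ih =>
    simp only [List.cons_append, semCtx_cons_iff, ih]
    constructor
    · rintro ⟨u, _, hu, ⟨a, b, ha, hb, rfl⟩, rfl⟩
      exact ⟨u ++ a, b, ⟨u, a, hu, ha, rfl⟩, hb, by simp⟩
    · rintro ⟨_, b, ⟨u, a, hu, ha, rfl⟩, hb, rfl⟩
      exact ⟨u, a ++ b, hu, ⟨a, b, ha, hb, rfl⟩, by simp⟩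

theorem SemCtx.append {Γ Δ a b : List (Fm P)} (ha : SemCtx Γ a) (hb : SemCtx Δ b) :
    SemCtx (Γ ++ Δ) (a ++ b) :=
  semCtx_append_iff.2 ⟨a, b, ha, hb, rfl⟩

theorem SemCtx.ne_nil {Γ Φ : List (Fm P)} (h : SemCtx Γ Φ) (hΓ : Γ ≠ []) : Φ ≠ [] := by
  cases h with
  | nil => exact absurd rfl hΓ
  | cons hu _ => simp [ne_nil_of_mem_sem hu]

theorem semCtx_self {Γ : List (Fm P)} (hΓ : ∀ A ∈ Γ, circFree A) : SemCtx Γ Γ := by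
  induction Γ with
  | nil => exact .nil
  | cons A Γ ih =>
    simpa using SemCtx.cons (sem_subset_and_singleton_mem_sem (hΓ A (by simp))).2
      (ih fun B hB => hΓ B (by simp [hB]))

def Valid (Γ : List (Fm P)) (B : Fm P) : Prop := ∀ Φ, SemCtx Γ Φ → Φ ∈ B.sem

namespace Valid

variable {Γ Δ Pi Psi : List (Fm P)} {A B C : Fm P}

theorem ldivL (h₁ : Valid (Γ ++ B :: Δ) C) (h₂ : Valid Pi A) :
    Valid (Γ ++ Pi ++ ldiv A B :: Δ) C := by
  intro Φ hΦ
  obtain ⟨_, _, hgp, hwd, rfl⟩ := semCtx_append_iff.1 hΦ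
  obtain ⟨g, p, hg, hp, rfl⟩ := semCtx_append_iff.1 hgp
  obtain ⟨w, d, hw, hd, rfl⟩ := semCtx_cons_iff.1 hwd
  simpa using h₁ _ (hg.append (.cons (hw.2 p (h₂ p hp)) hd))

theorem ldivR (h : Valid (A :: Pi) B) (hPi : Pi ≠ []) : Valid Pi (ldiv A B) :=
  fun _ hΦ => ⟨hΦ.ne_nil hPi, fun _ hu => h _ (.cons hu hΦ)⟩

theorem rdivL (h₁ : Valid (Γ ++ B :: Δ) C) (h₂ : Valid Pi A) :
    Valid (Γ ++ rdiv B A :: (Pi ++ Δ)) C := by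
  intro Φ hΦ
  obtain ⟨g, _, hg, hwpd, rfl⟩ := semCtx_append_iff.1 hΦ
  obtain ⟨w, _, hw, hpd, rfl⟩ := semCtx_cons_iff.1 hwpd
  obtain ⟨p, d, hp, hd, rfl⟩ := semCtx_append_iff.1 hpd
  simpa using h₁ _ (hg.append (.cons (hw.2 p (h₂ p hp)) hd))

theorem rdivR (h : Valid (Pi ++ [A]) B) (hPi : Pi ≠ []) : Valid Pi (rdiv B A) :=
  fun _ hΦ => ⟨hΦ.ne_nil hPi, fun _ hu => h _ (hΦ.append (semCtx_singleton_iff.2 hu))⟩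

theorem mulL (h : Valid (Γ ++ A :: B :: Δ) C) : Valid (Γ ++ mul A B :: Δ) C := by
  intro Φ hΦ
  obtain ⟨g, _, hg, hwd, rfl⟩ := semCtx_append_iff.1 hΦ
  obtain ⟨w, d, ⟨hw, hwAB⟩, hd, rfl⟩ := semCtx_cons_iff.1 hwd
  refine ctxClosure_sem_subset C ⟨by simp [hw], fun Γ' Δ' C' hC => ?_⟩
  simpa using hwAB (Γ' ++ g) (d ++ Δ') C' fun _ ⟨u, hu, v, hv, huv⟩ => by
    subst huv
    simpa using hC _ (h _ (hg.append (.cons hu (.cons hv hd))))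

theorem mulR (h₁ : Valid Pi A) (h₂ : Valid Psi B) : Valid (Pi ++ Psi) (mul A B) := by
  intro Φ hΦ
  obtain ⟨p, q, hp, hq, rfl⟩ := semCtx_append_iff.1 hΦ
  exact ⟨by simp [ne_nil_of_mem_sem (h₁ p hp)], fun _ _ _ hC =>
    hC _ (Set.mem_image2_of_mem (h₁ p hp) (h₂ q hq))⟩

theorem circR (h : Valid Pi A) : Valid Pi (circ A) :=
  fun Φ hΦ => subset_cycClosure (h Φ hΦ)

theorem circL (h : Valid [B] (circ A)) : Valid [circ B] (circ A) := by
  intro Φ hΦ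
  exact cycClosure_subset (fun u hu => h u (semCtx_singleton_iff.2 hu))
    cyclicClosed_cycClosure ctxClosure_cycClosure_subset (semCtx_singleton_iff.1 hΦ)

theorem circC (h : Valid (Pi ++ Psi) (circ A)) (hPi : Pi ≠ []) (hPsi : Psi ≠ []) :
    Valid (Psi ++ Pi) (circ A) := by
  intro Φ hΦ
  obtain ⟨q, p, hq, hp, rfl⟩ := semCtx_append_iff.1 hΦ
  exact cyclicClosed_cycClosure p q (h _ (hp.append hq)) (hp.ne_nil hPi) (hq.ne_nil hPsi)

theorem cut (h₁ : Valid Pi A) (h₂ : Valid (Γ ++ A :: Δ) B) : Valid (Γ ++ Pi ++ Δ) B := by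
  intro Φ hΦ
  obtain ⟨_, d, hgp, hd, rfl⟩ := semCtx_append_iff.1 hΦ
  obtain ⟨g, p, hg, hp, rfl⟩ := semCtx_append_iff.1 hgp
  simpa using h₂ _ (hg.append (.cons (h₁ p hp) hd))

end Valid

theorem Dv.valid {c : Bool} {Γ : List (Fm P)} {B : Fm P} (h : Dv P c Γ B) : Valid Γ B := by
  induction h with
  | ax => exact fun _ => semCtx_singleton_iff.1
  | ldivL _ _ _ _ _ _ _ _ _ _ ih₁ ih₂ => exact ih₁.ldivL ih₂
  | ldivR _ _ _ _ _ hne ih => exact ih.ldivR hne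
  | rdivL _ _ _ _ _ _ _ _ _ _ ih₁ ih₂ => exact ih₁.rdivL ih₂
  | rdivR _ _ _ _ _ hne ih => exact ih.rdivR hne
  | mulL _ _ _ _ _ _ _ ih => exact ih.mulL
  | mulR _ _ _ _ _ _ _ _ _ ih₁ ih₂ => exact ih₁.mulR ih₂
  | circR _ _ _ _ ih => exact ih.circR
  | circL _ _ _ _ ih => exact ih.circL
  | circC _ _ _ _ _ hne₁ hne₂ ih => exact ih.circC hne₁ hne₂
  | cut _ _ _ _ _ _ _ _ ih₁ ih₂ => exact ih₁.cut ih₂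

end CanonicalModel

/-- `L^∘` is a conservative extension of `L`: a sequent in which no type
contains `^∘` is derivable in `L^∘` iff it is derivable in `L`. -/
theorem Lcirc_conservative_over_L (P : Type) (Γ : List (Fm P)) (B : Fm P)
    (hΓ : ∀ A ∈ Γ, circFree A) (hB : circFree B) :
    Dv P true Γ B ↔ DvL P Γ B :=
  ⟨fun h => (sem_subset_and_singleton_mem_sem hB).1 (h.valid Γ (semCtx_self hΓ)), DvL.toDv⟩
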